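/- arXiv:1701.07498 — 8 statements merged into one kernel-verified Lean document; each statement's English description precedes it below -/
import Mathlib

section
/- There exists an optimal schedule σ* in which the earlier-schedule jobs appear in increasing index order of start times, the later-schedule jobs appear in increasing index order of start times, and if J_a denotes the later-schedule job with the smallest start time, then Δ_a(σ*) ≥ Δ_j(σ*) for every later-schedule job J_j; that is, the first job in the later schedule reaches the maximum time deviation among all the jobs in the later schedule. -/
open Finset

variable (n : ℕ)

/-- Completion time of job `j` in the original WSPT schedule `π*`:
`C_j(π*) = p_1 + ⋯ + p_j`. -/
def Corig (p : Fin n → ℤ) (j : Fin n) : ℤ :=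
  ∑ i ∈ Finset.univ.filter (fun i => i ≤ j), p i

/-- Start time of job `j` in the original schedule `π*`. -/
def Sorig (p : Fin n → ℤ) (j : Fin n) : ℤ :=
  Corig n p j - p j

/-- A feasible schedule: integer start times `σ j ≥ 0`, pairwise disjoint open
processing intervals, and every job either completes by `T1` (earlier schedule)
or starts at or after `T2` (later schedule). -/
def Feasible (p : Fin n → ℤ) (T1 T2 : ℤ) (σ : Fin n → ℤ) : Prop :=
  (∀ j, 0 ≤ σ j) ∧
  (∀ i j, i ≠ j → σ i + p i ≤ σ j ∨ σ j + p j ≤ σ i) ∧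
  (∀ j, σ j + p j ≤ T1 ∨ T2 ≤ σ j)

/-- Time deviation of job `j`: `Δ_j(σ) = |C_j(σ) − C_j(π*)|`. -/
def Dev (p : Fin n → ℤ) (σ : Fin n → ℤ) (j : Fin n) : ℤ :=
  |σ j + p j - Corig n p j|

/-- Maximum time deviation `Δ_max(σ) = max_{1≤j≤n} Δ_j(σ)` (all deviations are
nonnegative, so folding `max` from `0` gives the maximum when `n ≥ 1`). -/
def Dmax (p : Fin n → ℤ) (σ : Fin n → ℤ) : ℤ :=
  Finset.fold max 0 (Dev n p σ) Finset.univ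

/-- Admissible: feasible with `Δ_max(σ) ≤ k`. -/
def Admissible (p : Fin n → ℤ) (T1 T2 k : ℤ) (σ : Fin n → ℤ) : Prop :=
  Feasible n p T1 T2 σ ∧ Dmax n p σ ≤ k

/-- Total weighted completion time `Σ_j w_j · C_j(σ)`. -/
def WObj (p w : Fin n → ℤ) (σ : Fin n → ℤ) : ℤ :=
  ∑ j, w j * (σ j + p j)

/-- The objective `Z(σ) = μ·Δ_max(σ) + Σ_j w_j·C_j(σ)`. -/
def Zval (p w : Fin n → ℤ) (μ : ℚ) (σ : Fin n → ℤ) : ℚ :=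
  μ * (Dmax n p σ : ℚ) + (WObj n p w σ : ℚ)

/-- Optimal: admissible and minimizing `Z` over all admissible schedules. -/
def Optimal (p w : Fin n → ℤ) (T1 T2 k : ℤ) (μ : ℚ) (σ : Fin n → ℤ) : Prop :=
  Admissible n p T1 T2 k σ ∧
  ∀ τ, Admissible n p T1 T2 k τ → Zval n p w μ σ ≤ Zval n p w μ τ

/-- `t ≥ 0` is an earlier-schedule idle time unit of `σ`: no job is processed
during `[t, t+1]` and some earlier-schedule job starts at or after `t+1`. -/
def IdleUnit (p : Fin n → ℤ) (T1 : ℤ) (σ : Fin n → ℤ) (t : ℤ) : Prop :=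
  0 ≤ t ∧ (∀ m, ¬(σ m ≤ t ∧ t + 1 ≤ σ m + p m)) ∧
  ∃ j, σ j + p j ≤ T1 ∧ t + 1 ≤ σ j


lemma packingAux {n : ℕ} (p σ : Fin n → ℤ) (hp : ∀ j, 0 < p j)
    (hdisj : ∀ i j, i ≠ j → σ i + p i ≤ σ j ∨ σ j + p j ≤ σ i) :
    ∀ (N : ℕ) (F : Finset (Fin n)) (B : ℤ), F.card ≤ N → 0 ≤ B →
      (∀ j ∈ F, 0 ≤ σ j) → (∀ j ∈ F, σ j + p j ≤ B) → ∑ j ∈ F, p j ≤ B := by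
  intro N
  induction N with
  | zero =>
    intro F B hcard hB _ _
    have : F = ∅ := Finset.card_eq_zero.mp (Nat.le_zero.mp hcard)
    simp [this, hB]
  | succ N ih =>
    intro F B hcard hB h0 hend
    rcases F.eq_empty_or_nonempty with rfl | hne
    · simpa using hB
    · obtain ⟨m, hm, hmax⟩ := F.exists_max_image σ hne
      have hsub : ∀ j ∈ F.erase m, σ j + p j ≤ σ m := by
        intro j hj
        have hjF := Finset.mem_of_mem_erase hj
        have hjm := Finset.ne_of_mem_erase hj
        rcases hdisj j m hjm with h | h
        · exact h
        · have := hmax j hjF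
          have := hp m
          linarith
      have hcard' : (F.erase m).card ≤ N := by
        have := Finset.card_erase_of_mem hm
        have hpos := Finset.card_pos.mpr hne
        omega
      have hIH := ih (F.erase m) (σ m) hcard' (h0 m hm)
        (fun j hj => h0 j (Finset.mem_of_mem_erase hj)) hsub
      have hsum : ∑ j ∈ F.erase m, p j + p m = ∑ j ∈ F, p j :=
        Finset.sum_erase_add F p hm
      have := hend m hm
      linarith

lemma packing {n : ℕ} (p σ : Fin n → ℤ) (hp : ∀ j, 0 < p j)
    (hdisj : ∀ i j, i ≠ j → σ i + p i ≤ σ j ∨ σ j + p j ≤ σ i)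
    (F : Finset (Fin n)) (B : ℤ) (hB : 0 ≤ B)
    (h0 : ∀ j ∈ F, 0 ≤ σ j) (hend : ∀ j ∈ F, σ j + p j ≤ B) :
    ∑ j ∈ F, p j ≤ B :=
  packingAux p σ hp hdisj F.card F B le_rfl hB h0 hend

lemma prefixMono {n : ℕ} (p : Fin n → ℤ) (hp : ∀ j, 0 < p j) (S : Finset (Fin n))
    {i j : Fin n} (hij : i ≤ j) :
    ∑ x ∈ S.filter (fun x => x ≤ i), p x ≤ ∑ x ∈ S.filter (fun x => x ≤ j), p x := by
  apply Finset.sum_le_sum_of_subset_of_nonneg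
  · intro x hx
    simp only [Finset.mem_filter] at hx ⊢
    exact ⟨hx.1, le_trans hx.2 hij⟩
  · exact fun x _ _ => (hp x).le

lemma prefixStep {n : ℕ} (p : Fin n → ℤ) (hp : ∀ j, 0 < p j) (S : Finset (Fin n))
    {i j : Fin n} (hij : i < j) (hjS : j ∈ S) :
    ∑ x ∈ S.filter (fun x => x ≤ i), p x + p j ≤ ∑ x ∈ S.filter (fun x => x ≤ j), p x := by
  have hnotmem : j ∉ S.filter (fun x => x ≤ i) := by
    simp only [Finset.mem_filter, not_and]
    exact fun _ h => absurd h (not_le.mpr hij)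
  have hsub : insert j (S.filter (fun x => x ≤ i)) ⊆ S.filter (fun x => x ≤ j) := by
    intro x hx
    rcases Finset.mem_insert.mp hx with rfl | hx
    · exact Finset.mem_filter.mpr ⟨hjS, le_rfl⟩
    · have := Finset.mem_filter.mp hx
      exact Finset.mem_filter.mpr ⟨this.1, le_trans this.2 hij.le⟩
  calc ∑ x ∈ S.filter (fun x => x ≤ i), p x + p j
      = ∑ x ∈ insert j (S.filter (fun x => x ≤ i)), p x := by
        rw [Finset.sum_insert hnotmem]; ring
    _ ≤ ∑ x ∈ S.filter (fun x => x ≤ j), p x :=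
        Finset.sum_le_sum_of_subset_of_nonneg hsub (fun x _ _ => (hp x).le)

lemma pairSum {n : ℕ} (p w σ : Fin n → ℤ)
    (hwspt : ∀ i j : Fin n, i ≤ j → p i * w j ≤ p j * w i)
    (S : Finset (Fin n))
    (hdistinct : ∀ i j : Fin n, i ≠ j → σ i + p i ≠ σ j + p j) :
    ∑ j ∈ S, ∑ i ∈ S, (if i ≤ j then w j * p i else 0)
      ≤ ∑ j ∈ S, ∑ i ∈ S, (if σ i + p i ≤ σ j + p j then w j * p i else 0) := by
  classical
  set G : Fin n × Fin n → ℤ := fun q =>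
    (if σ q.2 + p q.2 ≤ σ q.1 + p q.1 then w q.1 * p q.2 else 0)
      - (if q.2 ≤ q.1 then w q.1 * p q.2 else 0) with hG
  have key : ∀ q : Fin n × Fin n, 0 ≤ G q + G (q.2, q.1) := by
    rintro ⟨j, i⟩
    simp only [hG]
    rcases eq_or_ne i j with rfl | hne
    · simp
    · rcases le_or_gt i j with hij | hji
      · have hji' : ¬ j ≤ i := fun h => hne (le_antisymm hij h)
        rcases le_or_gt (σ i + p i) (σ j + p j) with hC | hC
        · have hC' : ¬ (σ j + p j ≤ σ i + p i) :=
            fun h => hdistinct j i (Ne.symm hne) (le_antisymm h hC)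
          simp only [if_pos hC, if_pos hij, if_neg hC', if_neg hji']
          linarith
        · have hC2 : σ j + p j ≤ σ i + p i := hC.le
          have hC' : ¬ (σ i + p i ≤ σ j + p j) := not_le.mpr hC
          simp only [if_neg hC', if_pos hij, if_pos hC2, if_neg hji']
          have := hwspt i j hij
          nlinarith [this]
      · have hij' : ¬ i ≤ j := not_le.mpr hji
        rcases le_or_gt (σ i + p i) (σ j + p j) with hC | hC
        · have hC' : ¬ (σ j + p j ≤ σ i + p i) :=
            fun h => hdistinct j i (Ne.symm hne) (le_antisymm h hC)
          simp only [if_pos hC, if_neg hij', if_neg hC', if_pos hji.le]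
          have := hwspt j i hji.le
          nlinarith [this]
        · have hC2 : σ j + p j ≤ σ i + p i := hC.le
          have hC' : ¬ (σ i + p i ≤ σ j + p j) := not_le.mpr hC
          simp only [if_neg hC', if_neg hij', if_pos hC2, if_pos hji.le]
          linarith
  have hswap : ∑ q ∈ S ×ˢ S, G (q.2, q.1) = ∑ q ∈ S ×ˢ S, G q := by
    calc ∑ q ∈ S ×ˢ S, G (q.2, q.1)
        = ∑ x ∈ S, ∑ y ∈ S, G (y, x) := Finset.sum_product S S (fun q => G (q.2, q.1))
      _ = ∑ y ∈ S, ∑ x ∈ S, G (y, x) := Finset.sum_comm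
      _ = ∑ q ∈ S ×ˢ S, G q := (Finset.sum_product S S G).symm
  have h2 : 0 ≤ ∑ q ∈ S ×ˢ S, (G q + G (q.2, q.1)) :=
    Finset.sum_nonneg fun q _ => key q
  rw [Finset.sum_add_distrib, hswap] at h2
  have hGnn : 0 ≤ ∑ q ∈ S ×ˢ S, G q := by linarith
  have hRL : ∑ q ∈ S ×ˢ S, G q
      = (∑ j ∈ S, ∑ i ∈ S, (if σ i + p i ≤ σ j + p j then w j * p i else 0))
        - (∑ j ∈ S, ∑ i ∈ S, (if i ≤ j then w j * p i else 0)) := by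
    rw [Finset.sum_product]
    simp only [hG]
    rw [← Finset.sum_sub_distrib]
    congr 1
    ext j
    rw [← Finset.sum_sub_distrib]
  linarith [hRL ▸ hGnn]

lemma Dev_le_Dmax' {n : ℕ} (p σ : Fin n → ℤ) (j : Fin n) :
    Dev n p σ j ≤ Dmax n p σ :=
  (Finset.le_fold_max _).2 (Or.inr ⟨j, Finset.mem_univ j, le_rfl⟩)

lemma Dmax_nonneg' {n : ℕ} (p σ : Fin n → ℤ) : 0 ≤ Dmax n p σ :=
  (Finset.le_fold_max _).2 (Or.inl le_rfl)

lemma Dmax_le' {n : ℕ} (p σ : Fin n → ℤ) {c : ℤ} (h0 : 0 ≤ c)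
    (h : ∀ j, Dev n p σ j ≤ c) : Dmax n p σ ≤ c :=
  (Finset.fold_max_le _).2 ⟨h0, fun x _ => h x⟩

lemma Zval_mono' {n : ℕ} (p w : Fin n → ℤ) {μ : ℚ} (hμ : 0 ≤ μ) (σ' σ : Fin n → ℤ)
    (hD : Dmax n p σ' ≤ Dmax n p σ) (hW : WObj n p w σ' ≤ WObj n p w σ) :
    Zval n p w μ σ' ≤ Zval n p w μ σ :=
  add_le_add (mul_le_mul_of_nonneg_left (by exact_mod_cast hD) hμ) (by exact_mod_cast hW)

lemma admFinite' {n : ℕ} (p : Fin n → ℤ) (T1 T2 k : ℤ) :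
    {σ : Fin n → ℤ | Admissible n p T1 T2 k σ}.Finite := by
  apply Set.Finite.subset
    (Set.Finite.pi (fun j => Set.finite_Icc (0 : ℤ) (k + Corig n p j - p j)))
  rintro σ ⟨⟨h0, _, _⟩, hD⟩
  intro j _
  have h1 : Dev n p σ j ≤ k := le_trans (Dev_le_Dmax' p σ j) hD
  have h2 := (abs_le.mp h1).2
  exact ⟨h0 j, by linarith⟩
set_option maxHeartbeats 2000000 in
/-- there exists an optimal schedule with both halves in WSPT
order in which the first job of the later schedule attains the maximum time
deviation among all later-schedule jobs. -/
theorem stmt_7 (n : ℕ) (p w : Fin n → ℤ) (T1 T2 k : ℤ) (μ : ℚ)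
    (hn : 0 < n) (hp : ∀ j, 0 < p j) (hw : ∀ j, 0 < w j)
    (hwspt : ∀ i j : Fin n, i ≤ j → p i * w j ≤ p j * w i)
    (hT1 : 0 ≤ T1) (hT12 : T1 < T2) (hk : 0 ≤ k) (hμ : 0 ≤ μ)
    (hadm : ∃ σ, Admissible n p T1 T2 k σ)
    (hP : T1 < ∑ j, p j) :
    ∃ σ, Optimal n p w T1 T2 k μ σ ∧
      (∀ i j : Fin n, i < j → σ i + p i ≤ T1 → σ j + p j ≤ T1 → σ i < σ j) ∧
      (∀ i j : Fin n, i < j → T2 ≤ σ i → T2 ≤ σ j → σ i < σ j) ∧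
      (∀ a, T2 ≤ σ a → (∀ m, T2 ≤ σ m → σ a ≤ σ m) →
        ∀ j, T2 ≤ σ j → Dev n p σ j ≤ Dev n p σ a) := by
  classical
  obtain ⟨σ₀, hσ₀⟩ := hadm
  have hAfin := admFinite' p T1 T2 k
  set AF := hAfin.toFinset with hAF
  have hmemAF : ∀ τ, τ ∈ AF ↔ Admissible n p T1 T2 k τ :=
    fun τ => Set.Finite.mem_toFinset _
  have hAFne : AF.Nonempty := ⟨σ₀, (hmemAF σ₀).2 hσ₀⟩
  obtain ⟨σ₁, hσ₁, hσ₁min⟩ := AF.exists_min_image (Zval n p w μ) hAFne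
  set OF := AF.filter (fun τ => Zval n p w μ τ ≤ Zval n p w μ σ₁) with hOFdef
  have hOFopt : ∀ τ ∈ OF, Optimal n p w T1 T2 k μ τ := by
    intro τ hτ
    obtain ⟨hτA, hτZ⟩ := Finset.mem_filter.mp hτ
    exact ⟨(hmemAF τ).1 hτA, fun ρ hρ => le_trans hτZ (hσ₁min ρ ((hmemAF ρ).2 hρ))⟩
  have hZOF : ∀ τ, Admissible n p T1 T2 k τ →
      Zval n p w μ τ ≤ Zval n p w μ σ₁ → τ ∈ OF :=
    fun τ h hZ => Finset.mem_filter.mpr ⟨(hmemAF τ).2 h, hZ⟩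
  set M : ℤ := 1 + ∑ x, p x with hM
  have hM1 : (1:ℤ) ≤ M := by
    have : (0:ℤ) ≤ ∑ x, p x := Finset.sum_nonneg fun x _ => (hp x).le
    omega
  have hMp : ∀ x, p x + 1 ≤ M := by
    intro x
    have : p x ≤ ∑ y, p y := Finset.single_le_sum (fun i _ => (hp i).le) (Finset.mem_univ x)
    omega
  set Φ : (Fin n → ℤ) → ℤ := fun σ' => ∑ j, M ^ (n - 1 - j.val) * σ' j with hΦ
  have hOFne : OF.Nonempty := ⟨σ₁, Finset.mem_filter.mpr ⟨hσ₁, le_rfl⟩⟩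
  obtain ⟨σ, hσOF, hσΦ⟩ := OF.exists_min_image Φ hOFne
  obtain ⟨⟨⟨hpos, hdisj, htri⟩, hDk⟩, hminZ⟩ := hOFopt σ hσOF
  have hZσ : Zval n p w μ σ ≤ Zval n p w μ σ₁ := (Finset.mem_filter.mp hσOF).2
  have hsplit : ∀ (a b : Fin n), a ≠ b → ∀ (g : Fin n → ℤ),
      ∑ x, g x = g a + g b + ∑ x ∈ (Finset.univ \ {a, b} : Finset (Fin n)), g x := by
    intro a b hab g
    rw [← Finset.sum_sdiff (Finset.subset_univ ({a, b} : Finset (Fin n))),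
      Finset.sum_pair hab]
    ring
  have hEorder : ∀ i j : Fin n, i < j → σ i + p i ≤ T1 → σ j + p j ≤ T1 → σ i < σ j := by
    by_contra hcon
    push_neg at hcon
    obtain ⟨i, j, hij, hEi, hEj, hji⟩ := hcon
    have hinv : σ j + p j ≤ σ i := by
      rcases hdisj i j hij.ne with h | h
      · exfalso; have := hp i; linarith
      · exact h
    set P := (Finset.univ ×ˢ Finset.univ : Finset (Fin n × Fin n)).filter
      (fun q => q.1 < q.2 ∧ σ q.1 + p q.1 ≤ T1 ∧ σ q.2 + p q.2 ≤ T1 ∧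
        σ q.2 + p q.2 ≤ σ q.1) with hPdef
    have hPne : P.Nonempty :=
      ⟨(i, j), Finset.mem_filter.mpr ⟨Finset.mem_product.mpr
        ⟨Finset.mem_univ _, Finset.mem_univ _⟩, hij, hEi, hEj, hinv⟩⟩
    obtain ⟨q, hqP, hqmin0⟩ := P.exists_min_image (fun q => σ q.1 - σ q.2) hPne
    obtain ⟨a, b⟩ := q
    obtain ⟨-, hq1, hq2, hq3, hq4⟩ := Finset.mem_filter.mp hqP
    have hab : a < b := hq1
    have hEa : σ a + p a ≤ T1 := hq2
    have hEb : σ b + p b ≤ T1 := hq3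
    have hba : σ b + p b ≤ σ a := hq4
    have hqmin : ∀ u v : Fin n, (u, v) ∈ P → σ a - σ b ≤ σ u - σ v :=
      fun u v h => hqmin0 (u, v) h
    have hne : a ≠ b := hab.ne
    have hσblt : σ b < σ a := by have := hp b; linarith
    have hmid : ∀ m, ¬(σ b + p b ≤ σ m ∧ σ m + p m ≤ σ a) := by
      rintro m ⟨h1, h2⟩
      have hEm : σ m + p m ≤ T1 := by have := hp a; linarith
      rcases lt_trichotomy m a with hma | heq | ham
      · have hmb : m < b := lt_trans hma hab
        have hPm : (m, b) ∈ P := Finset.mem_filter.mpr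
          ⟨Finset.mem_product.mpr ⟨Finset.mem_univ _, Finset.mem_univ _⟩, hmb, hEm, hEb, h1⟩
        have := hqmin m b hPm
        have := hp m
        linarith
      · rw [heq] at h2; have := hp a; linarith
      · have hPm : (a, m) ∈ P := Finset.mem_filter.mpr
          ⟨Finset.mem_product.mpr ⟨Finset.mem_univ _, Finset.mem_univ _⟩, ham, hEa, hEm, h2⟩
        have := hqmin a m hPm
        have := hp b
        linarith
    set σ' : Fin n → ℤ := fun x => if x = a then σ b else if x = b then σ b + p a else σ x
      with hσ'def
    have hva : σ' a = σ b := by simp [hσ'def]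
    have hvb : σ' b = σ b + p a := by simp [hσ'def, Ne.symm hne]
    have hvm : ∀ m, m ≠ a → m ≠ b → σ' m = σ m := by
      intro m h1 h2
      simp only [hσ'def]
      rw [if_neg h1, if_neg h2]
    have hcab : Corig n p a + p b ≤ Corig n p b := by
      have := prefixStep p hp Finset.univ hab (Finset.mem_univ b)
      simpa [Corig] using this
    -- feasibility of σ'
    have keyA : ∀ m, m ≠ a → m ≠ b → σ' a + p a ≤ σ m ∨ σ m + p m ≤ σ' a := by
      intro m hma hmb
      rcases hdisj b m (Ne.symm hmb) with h | h
      · rcases hdisj a m (Ne.symm hma) with h' | h'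
        · left; rw [hva]; linarith
        · exact absurd ⟨h, h'⟩ (hmid m)
      · right; rw [hva]; linarith
    have keyB : ∀ m, m ≠ a → m ≠ b → σ' b + p b ≤ σ m ∨ σ m + p m ≤ σ' b := by
      intro m hma hmb
      rcases hdisj b m (Ne.symm hmb) with h | h
      · rcases hdisj a m (Ne.symm hma) with h' | h'
        · left; rw [hvb]; linarith
        · exact absurd ⟨h, h'⟩ (hmid m)
      · right; rw [hvb]; linarith [hp a]
    have hfeas' : Feasible n p T1 T2 σ' := by
      refine ⟨?_, ?_, ?_⟩
      · intro x
        by_cases hxa : x = a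
        · rw [hxa, hva]; exact hpos b
        by_cases hxb : x = b
        · rw [hxb, hvb]; have := hp a; have := hpos b; linarith
        · rw [hvm x hxa hxb]; exact hpos x
      · intro x y hxy
        by_cases hxa : x = a
        · by_cases hyb : y = b
          · rw [hxa, hyb, hva, hvb]; left; rfl
          · have hya : y ≠ a := by rw [hxa] at hxy; exact Ne.symm hxy
            rcases keyA y hya hyb with h | h
            · left; rw [hxa, hvm y hya hyb]; exact h
            · right; rw [hxa, hvm y hya hyb]; exact h
        by_cases hxb : x = b
        · by_cases hya : y = a
          · rw [hxb, hya, hva, hvb]; right; rfl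
          · have hyb : y ≠ b := by rw [hxb] at hxy; exact Ne.symm hxy
            rcases keyB y hya hyb with h | h
            · left; rw [hxb, hvm y hya hyb]; exact h
            · right; rw [hxb, hvm y hya hyb]; exact h
        · by_cases hya : y = a
          · rcases keyA x hxa hxb with h | h
            · right; rw [hya, hvm x hxa hxb]; exact h
            · left; rw [hya, hvm x hxa hxb]; exact h
          by_cases hyb : y = b
          · rcases keyB x hxa hxb with h | h
            · right; rw [hyb, hvm x hxa hxb]; exact h
            · left; rw [hyb, hvm x hxa hxb]; exact h
          · rw [hvm x hxa hxb, hvm y hya hyb]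
            exact hdisj x y hxy
      · intro x
        by_cases hxa : x = a
        · left; rw [hxa, hva]; linarith
        by_cases hxb : x = b
        · left; rw [hxb, hvb]; linarith
        · rw [hvm x hxa hxb]; exact htri x
    -- Dmax bound
    have hDa := abs_le.mp (Dev_le_Dmax' p σ a)
    have hDb := abs_le.mp (Dev_le_Dmax' p σ b)
    have hD' : Dmax n p σ' ≤ Dmax n p σ := by
      apply Dmax_le' p σ' (Dmax_nonneg' p σ)
      intro x
      by_cases hxa : x = a
      · have hrw : Dev n p σ' x = |σ b + p a - Corig n p a| := by
          rw [hxa]; simp only [Dev, hva]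
        rw [hrw, abs_le]
        constructor
        · have := hp a; linarith [hDb.1]
        · have := hp b; linarith [hDa.2]
      by_cases hxb : x = b
      · have hrw : Dev n p σ' x = |σ b + p a + p b - Corig n p b| := by
          rw [hxb]; simp only [Dev, hvb]
        rw [hrw, abs_le]
        constructor
        · have := hp a; linarith [hDb.1]
        · have := hp b; linarith [hDa.2]
      · have hrw : Dev n p σ' x = Dev n p σ x := by
          simp only [Dev, hvm x hxa hxb]
        rw [hrw]; exact Dev_le_Dmax' p σ x
    -- WObj bound
    have hW' : WObj n p w σ' ≤ WObj n p w σ := by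
      have e1 := hsplit a b hne (fun x => w x * (σ' x + p x))
      have e2 := hsplit a b hne (fun x => w x * (σ x + p x))
      have erest : ∑ x ∈ (Finset.univ \ {a, b} : Finset (Fin n)), w x * (σ' x + p x)
          = ∑ x ∈ (Finset.univ \ {a, b} : Finset (Fin n)), w x * (σ x + p x) := by
        apply Finset.sum_congr rfl
        intro x hx
        simp only [Finset.mem_sdiff, Finset.mem_insert, Finset.mem_singleton] at hx
        rw [hvm x (fun h => hx.2 (Or.inl h)) (fun h => hx.2 (Or.inr h))]
      have hws := hwspt a b hab.le
      have h1 : w a * (σ b - σ a) ≤ w a * (-(p b)) :=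
        mul_le_mul_of_nonneg_left (by linarith) (hw a).le
      have hkey : w a * (σ' a + p a) + w b * (σ' b + p b)
          ≤ w a * (σ a + p a) + w b * (σ b + p b) := by
        rw [hva, hvb]; nlinarith [h1, hws]
      simp only [WObj]
      rw [e1, e2, erest]
      linarith [hkey]
    have hZ' : Zval n p w μ σ' ≤ Zval n p w μ σ := Zval_mono' p w hμ σ' σ hD' hW'
    have hadm' : Admissible n p T1 T2 k σ' := ⟨hfeas', le_trans hD' hDk⟩
    have hmem' : σ' ∈ OF := hZOF σ' hadm' (le_trans hZ' hZσ)
    -- Φ decreases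
    have e1 := hsplit a b hne (fun x => M ^ (n - 1 - x.val) * σ' x)
    have e2 := hsplit a b hne (fun x => M ^ (n - 1 - x.val) * σ x)
    have erest : ∑ x ∈ (Finset.univ \ {a, b} : Finset (Fin n)), M ^ (n - 1 - x.val) * σ' x
        = ∑ x ∈ (Finset.univ \ {a, b} : Finset (Fin n)), M ^ (n - 1 - x.val) * σ x := by
      apply Finset.sum_congr rfl
      intro x hx
      simp only [Finset.mem_sdiff, Finset.mem_insert, Finset.mem_singleton] at hx
      rw [hvm x (fun h => hx.2 (Or.inl h)) (fun h => hx.2 (Or.inr h))]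
    have hA1pos : (0:ℤ) < M ^ (n - 1 - a.val) := pow_pos (by linarith) _
    have hA2pos : (0:ℤ) < M ^ (n - 1 - b.val) := pow_pos (by linarith) _
    have hexp : n - 1 - b.val + 1 ≤ n - 1 - a.val := by
      have hav := a.isLt; have hbv := b.isLt
      have hvab : a.val < b.val := hab
      omega
    have hpow : M ^ (n - 1 - b.val) * M ≤ M ^ (n - 1 - a.val) := by
      calc M ^ (n - 1 - b.val) * M = M ^ (n - 1 - b.val + 1) := (pow_succ M _).symm
        _ ≤ M ^ (n - 1 - a.val) := pow_le_pow_right₀ hM1 hexp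
    have t1 : M ^ (n - 1 - a.val) * (σ b - σ a) ≤ M ^ (n - 1 - a.val) * (-1) := by
      apply mul_le_mul_of_nonneg_left _ hA1pos.le
      have := hp b; linarith
    have t3 : M ^ (n - 1 - b.val) * (p a + 1) ≤ M ^ (n - 1 - b.val) * M :=
      mul_le_mul_of_nonneg_left (hMp a) hA2pos.le
    have hΦdiff : Φ σ' - Φ σ
        = M ^ (n - 1 - a.val) * (σ b - σ a) + M ^ (n - 1 - b.val) * p a := by
      simp only [hΦ]
      rw [e1, e2, erest, hva, hvb]
      ring
    have hΦlt : Φ σ' < Φ σ := by nlinarith [t1, t3, hpow, hΦdiff, hA1pos, hA2pos]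
    have := hσΦ σ' hmem'
    linarith
  -- Step 4: canonical repacking of the later schedule
  set Lset : Finset (Fin n) := Finset.univ.filter (fun x => T2 ≤ σ x) with hLset
  set pre : Fin n → ℤ := fun j => ∑ x ∈ Lset.filter (fun x => x ≤ j), p x with hpre
  set Epre : Fin n → ℤ :=
    fun j => ∑ x ∈ (Finset.univ.filter (fun x => ¬ T2 ≤ σ x)).filter (fun x => x ≤ j), p x
    with hEpre
  set τ : Fin n → ℤ := fun j => if T2 ≤ σ j then T2 + pre j - p j else σ j with hτdef
  have hLearly : ∀ x, ¬ T2 ≤ σ x → σ x + p x ≤ T1 := fun x h => (htri x).resolve_right h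
  have hpreself : ∀ j, T2 ≤ σ j → p j ≤ pre j := by
    intro j hj
    have hjmem : j ∈ Lset.filter (fun x => x ≤ j) := by
      simp [hLset, hj]
    exact Finset.single_le_sum (fun i _ => (hp i).le) hjmem
  have hτlate : ∀ j, T2 ≤ σ j → τ j = T2 + pre j - p j := by
    intro j hj; simp only [hτdef]; rw [if_pos hj]
  have hτearly : ∀ j, ¬ T2 ≤ σ j → τ j = σ j := by
    intro j hj; simp only [hτdef]; rw [if_neg hj]
  have hτlate_ge : ∀ j, T2 ≤ σ j → T2 ≤ τ j := by
    intro j hj; rw [hτlate j hj]; linarith [hpreself j hj]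
  have hstep : ∀ i j : Fin n, T2 ≤ σ i → T2 ≤ σ j → i < j → τ i + p i ≤ τ j := by
    intro i j hi hj hij
    rw [hτlate i hi, hτlate j hj]
    have hjL : j ∈ Lset := by simp [hLset, hj]
    have := prefixStep p hp Lset hij hjL
    simp only [hpre]
    linarith
  have hfeasτ : Feasible n p T1 T2 τ := by
    refine ⟨?_, ?_, ?_⟩
    · intro x
      by_cases hx : T2 ≤ σ x
      · have := hτlate_ge x hx; linarith
      · rw [hτearly x hx]; exact hpos x
    · intro x y hxy
      by_cases hx : T2 ≤ σ x
      · by_cases hy : T2 ≤ σ y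
        · rcases hxy.lt_or_gt with h | h
          · exact Or.inl (hstep x y hx hy h)
          · exact Or.inr (hstep y x hy hx h)
        · right
          rw [hτearly y hy]
          have := hLearly y hy
          have := hτlate_ge x hx
          linarith
      · by_cases hy : T2 ≤ σ y
        · left
          rw [hτearly x hx]
          have := hLearly x hx
          have := hτlate_ge y hy
          linarith
        · rw [hτearly x hx, hτearly y hy]
          exact hdisj x y hxy
    · intro x
      by_cases hx : T2 ≤ σ x
      · exact Or.inr (hτlate_ge x hx)
      · left; rw [hτearly x hx]; exact hLearly x hx
  have hCsplit : ∀ j, Corig n p j = pre j + Epre j := by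
    intro j
    have h := Finset.sum_filter_add_sum_filter_not
      (Finset.univ.filter (fun x => x ≤ j)) (fun x => T2 ≤ σ x) p
    have hs1 : (Finset.univ.filter (fun x => x ≤ j)).filter (fun x => T2 ≤ σ x)
        = Lset.filter (fun x => x ≤ j) := by
      simp only [hLset]; ext x; simp [and_comm]
    have hs2 : (Finset.univ.filter (fun x => x ≤ j)).filter (fun x => ¬ T2 ≤ σ x)
        = (Finset.univ.filter (fun x => ¬ T2 ≤ σ x)).filter (fun x => x ≤ j) := by
      ext x; simp [and_comm]
    rw [hs1, hs2] at h
    simp only [Corig, hpre, hEpre]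
    exact h.symm
  have hEpre_nonneg : ∀ j, 0 ≤ Epre j := by
    intro j
    simp only [hEpre]
    exact Finset.sum_nonneg fun x _ => (hp x).le
  have hEpre_mono : ∀ i j : Fin n, i ≤ j → Epre i ≤ Epre j := by
    intro i j hij
    simp only [hEpre]
    exact prefixMono p hp _ hij
  have hEpre_le_T1 : ∀ j, Epre j ≤ T1 := by
    intro j
    have h1 : Epre j ≤ ∑ x ∈ Finset.univ.filter (fun x => ¬ T2 ≤ σ x), p x := by
      simp only [hEpre]
      exact Finset.sum_le_sum_of_subset_of_nonneg (Finset.filter_subset _ _)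
        (fun x _ _ => (hp x).le)
    have h2 : ∑ x ∈ Finset.univ.filter (fun x => ¬ T2 ≤ σ x), p x ≤ T1 := by
      apply packing p σ hp hdisj _ T1 hT1
      · intro x _; exact hpos x
      · intro x hx
        exact hLearly x (Finset.mem_filter.mp hx).2
    linarith
  have hDevτ_late : ∀ j, T2 ≤ σ j → Dev n p τ j = T2 - Epre j := by
    intro j hj
    have hval : τ j + p j - Corig n p j = T2 - Epre j := by
      rw [hτlate j hj, hCsplit j]; ring
    simp only [Dev, hval]
    exact abs_of_nonneg (by linarith [hEpre_le_T1 j])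
  have hDevτ_early : ∀ j, ¬ T2 ≤ σ j → Dev n p τ j = Dev n p σ j := by
    intro j hj; simp only [Dev, hτearly j hj]
  have hDτ : Dmax n p τ ≤ Dmax n p σ := by
    apply Dmax_le' p τ (Dmax_nonneg' p σ)
    intro x
    by_cases hx : T2 ≤ σ x
    · obtain ⟨a0, ha0L, ha0min⟩ := Lset.exists_min_image (fun m => m)
        ⟨x, by simp [hLset, hx]⟩
      have ha0 : T2 ≤ σ a0 := (Finset.mem_filter.mp ha0L).2
      have ha0x : a0 ≤ x := ha0min x (by simp [hLset, hx])
      have hpre_a0 : pre a0 = p a0 := by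
        have hone : Lset.filter (fun m => m ≤ a0) = {a0} := by
          ext m
          simp only [Finset.mem_filter, Finset.mem_singleton]
          constructor
          · rintro ⟨hmL, hma⟩
            exact le_antisymm hma (ha0min m hmL)
          · rintro rfl
            exact ⟨ha0L, le_rfl⟩
        simp only [hpre]
        rw [hone, Finset.sum_singleton]
      have hDeva0 : T2 - Epre a0 ≤ Dev n p σ a0 := by
        have h1 : σ a0 + p a0 - Corig n p a0 ≤ Dev n p σ a0 := le_abs_self _
        have h2 : Corig n p a0 = p a0 + Epre a0 := by rw [hCsplit a0, hpre_a0]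
        simp only [Dev] at h1 ⊢
        linarith [h1, hx, ha0]
      rw [hDevτ_late x hx]
      have := hEpre_mono a0 x ha0x
      have := Dev_le_Dmax' p σ a0
      linarith
    · rw [hDevτ_early x hx]
      exact Dev_le_Dmax' p σ x
  have hdistinct : ∀ u v : Fin n, u ≠ v → σ u + p u ≠ σ v + p v := by
    intro u v huv heq
    rcases hdisj u v huv with h | h
    · have := hp v; linarith
    · have := hp u; linarith
  have hWτ : WObj n p w τ ≤ WObj n p w σ := by
    have hτs := Finset.sum_filter_add_sum_filter_not Finset.univ (fun x => T2 ≤ σ x)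
      (fun x => w x * (τ x + p x))
    have hσs := Finset.sum_filter_add_sum_filter_not Finset.univ (fun x => T2 ≤ σ x)
      (fun x => w x * (σ x + p x))
    have hearly_eq : ∑ x ∈ Finset.univ.filter (fun x => ¬ T2 ≤ σ x), w x * (τ x + p x)
        = ∑ x ∈ Finset.univ.filter (fun x => ¬ T2 ≤ σ x), w x * (σ x + p x) := by
      apply Finset.sum_congr rfl
      intro x hx
      rw [hτearly x (Finset.mem_filter.mp hx).2]
    have hlate_le : ∑ x ∈ Lset, w x * (τ x + p x) ≤ ∑ x ∈ Lset, w x * (σ x + p x) := by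
      have hstep1 : ∀ j ∈ Lset, w j * (τ j + p j)
          = w j * T2 + ∑ i ∈ Lset, (if i ≤ j then w j * p i else 0) := by
        intro j hj
        have hjL : T2 ≤ σ j := (Finset.mem_filter.mp hj).2
        rw [hτlate j hjL]
        have : ∑ i ∈ Lset, (if i ≤ j then w j * p i else 0)
            = w j * pre j := by
          rw [← Finset.sum_filter]
          simp only [hpre]
          rw [Finset.mul_sum]
        rw [this]; ring
      have hstep2 : ∀ j ∈ Lset,
          ∑ i ∈ Lset, (if σ i + p i ≤ σ j + p j then w j * p i else 0)
            ≤ w j * (σ j + p j - T2) := by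
        intro j hj
        have hjL : T2 ≤ σ j := (Finset.mem_filter.mp hj).2
        have hpack : ∑ i ∈ Lset.filter (fun i => σ i + p i ≤ σ j + p j), p i
            ≤ σ j + p j - T2 := by
          have hdisj2 : ∀ u v : Fin n, u ≠ v →
              (σ u - T2) + p u ≤ (σ v - T2) ∨ (σ v - T2) + p v ≤ (σ u - T2) := by
            intro u v huv
            rcases hdisj u v huv with h | h
            · left; linarith
            · right; linarith
          refine packing p (fun x => σ x - T2) hp hdisj2
            (Lset.filter (fun i => σ i + p i ≤ σ j + p j)) (σ j + p j - T2)
            (by linarith [hp j]) ?_ ?_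
          · intro x hx
            have hx1 : x ∈ Lset := (Finset.mem_filter.mp hx).1
            have hx2 : T2 ≤ σ x := (Finset.mem_filter.mp hx1).2
            linarith
          · intro x hx
            have := (Finset.mem_filter.mp hx).2
            linarith
        calc ∑ i ∈ Lset, (if σ i + p i ≤ σ j + p j then w j * p i else 0)
            = w j * ∑ i ∈ Lset.filter (fun i => σ i + p i ≤ σ j + p j), p i := by
              rw [← Finset.sum_filter, Finset.mul_sum]
          _ ≤ w j * (σ j + p j - T2) :=
              mul_le_mul_of_nonneg_left hpack (hw j).le
      have hps := pairSum p w σ hwspt Lset hdistinct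
      calc ∑ x ∈ Lset, w x * (τ x + p x)
          = ∑ j ∈ Lset, (w j * T2 + ∑ i ∈ Lset, (if i ≤ j then w j * p i else 0)) :=
            Finset.sum_congr rfl hstep1
        _ = ∑ j ∈ Lset, w j * T2 + ∑ j ∈ Lset, ∑ i ∈ Lset, (if i ≤ j then w j * p i else 0) :=
            Finset.sum_add_distrib
        _ ≤ ∑ j ∈ Lset, w j * T2
            + ∑ j ∈ Lset, ∑ i ∈ Lset, (if σ i + p i ≤ σ j + p j then w j * p i else 0) := by
            linarith [hps]
        _ ≤ ∑ j ∈ Lset, w j * T2 + ∑ j ∈ Lset, w j * (σ j + p j - T2) := by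
            have := Finset.sum_le_sum hstep2
            linarith [this]
        _ = ∑ j ∈ Lset, w j * (σ j + p j) := by
            rw [← Finset.sum_add_distrib]
            apply Finset.sum_congr rfl
            intro j _
            ring
    have hlate_le' : ∑ x ∈ Finset.univ.filter (fun x => T2 ≤ σ x), w x * (τ x + p x)
        ≤ ∑ x ∈ Finset.univ.filter (fun x => T2 ≤ σ x), w x * (σ x + p x) := hlate_le
    simp only [WObj]
    linarith [hτs, hσs, hlate_le', hearly_eq]
  have hZτ : Zval n p w μ τ ≤ Zval n p w μ σ := Zval_mono' p w hμ τ σ hDτ hWτ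
  have hadmτ : Admissible n p T1 T2 k τ := ⟨hfeasτ, le_trans hDτ hDk⟩
  have hoptτ : Optimal n p w T1 T2 k μ τ :=
    ⟨hadmτ, fun ρ hρ => le_trans hZτ (hminZ ρ hρ)⟩
  have hτE : ∀ x, τ x + p x ≤ T1 → ¬ T2 ≤ σ x := by
    intro x hx hL
    have h1 := hτlate_ge x hL
    have := hp x
    linarith
  have hτL : ∀ x, T2 ≤ τ x → T2 ≤ σ x := by
    intro x hx
    by_contra hL
    rw [hτearly x hL] at hx
    have := hLearly x hL
    have := hp x
    linarith
  refine ⟨τ, hoptτ, ?_, ?_, ?_⟩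
  · intro i j hij h1 h2
    have hi := hτE i h1
    have hj := hτE j h2
    rw [hτearly i hi, hτearly j hj]
    rw [hτearly i hi] at h1
    rw [hτearly j hj] at h2
    exact hEorder i j hij h1 h2
  · intro i j hij h1 h2
    have hi := hτL i h1
    have hj := hτL j h2
    have := hstep i j hi hj hij
    have := hp i
    linarith
  · intro a ha hamin j hj
    have haL : T2 ≤ σ a := hτL a ha
    have hjL : T2 ≤ σ j := hτL j hj
    have haidx : a ≤ j := by
      by_contra hlt
      push_neg at hlt
      have h1 := hstep j a hjL haL hlt
      have h2 := hamin j (hτlate_ge j hjL)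
      have := hp j
      linarith
    rw [hDevτ_late j hjL, hDevτ_late a haL]
    have := hEpre_mono a j haidx
    linarith
end

section
/- Let σ* be a feasible schedule in which the earlier-schedule jobs appear in increasing index order of start times and every earlier-schedule job J_j satisfies C_j(σ*) ≤ C_j(π*); suppose J_a is the later-schedule job of smallest index, S_a(σ*) = T_2, and all of the jobs J_1, …, J_{a−1} are in the earlier schedule. Let j_2 = min{j : S_j(π*) ≥ T_2}. Then for every index j with a+1 ≤ j ≤ j_2 − 1 such that J_j is in the earlier schedule, Δ_j(σ*) < Δ_a(σ*), where Δ_a(σ*) = T_2 − S_a(π*). -/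
open Finset

variable (n : ℕ)

lemma Sorig_eq_sum_lt (n : ℕ) (p : Fin n → ℤ) (i : Fin n) :
    Sorig n p i = ∑ x ∈ Finset.univ.filter (fun x => x < i), p x := by
  unfold Sorig Corig
  have h : Finset.univ.filter (fun x => x ≤ i) =
      insert i (Finset.univ.filter (fun x => x < i)) := by
    ext x
    simp [le_iff_lt_or_eq, or_comm]
  rw [h, Finset.sum_insert (by simp)]
  ring

/-- in a feasible schedule with the stated structure, every
earlier-schedule job `J_j` with `a < j < j2` has deviation strictly smaller
than `Δ_a = T2 − S_a(π*)`. -/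
theorem stmt_8 (n : ℕ) (p w : Fin n → ℤ) (T1 T2 : ℤ)
    (hn : 0 < n) (hp : ∀ j, 0 < p j) (hw : ∀ j, 0 < w j)
    (hwspt : ∀ i j : Fin n, i ≤ j → p i * w j ≤ p j * w i)
    (hT1 : 0 ≤ T1) (hT12 : T1 < T2)
    (σ : Fin n → ℤ) (hfeas : Feasible n p T1 T2 σ)
    (horder : ∀ i j : Fin n, i < j → σ i + p i ≤ T1 → σ j + p j ≤ T1 → σ i < σ j)
    (hearly : ∀ j, σ j + p j ≤ T1 → σ j + p j ≤ Corig n p j)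
    (a : Fin n) (ha : T2 ≤ σ a) (hamin : ∀ j, T2 ≤ σ j → a ≤ j)
    (haT2 : σ a = T2) (hpre : ∀ i, i < a → σ i + p i ≤ T1)
    (j2 : Fin n) (hj2 : T2 ≤ Sorig n p j2)
    (hj2min : ∀ j, T2 ≤ Sorig n p j → j2 ≤ j) :
    Dev n p σ a = T2 - Sorig n p a ∧
    ∀ j, a < j → j < j2 → σ j + p j ≤ T1 → Dev n p σ j < Dev n p σ a := by
  obtain ⟨hσ0, hdisj, hsplit⟩ := hfeas
  have hseq : ∀ i i' : Fin n, i < i' → σ i + p i ≤ T1 → σ i' + p i' ≤ T1 →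
      σ i + p i ≤ σ i' := by
    intro i i' hlt h1 h2
    rcases hdisj i i' (ne_of_lt hlt) with h | h
    · exact h
    · have := horder i i' hlt h1 h2
      have := hp i'
      linarith
  have key : ∀ m : ℕ, ∀ i : Fin n, i.val = m → i < a → Corig n p i ≤ σ i + p i := by
    intro m
    induction m using Nat.strong_induction_on with
    | _ m ih =>
      intro i him hia
      have hCS : Corig n p i = Sorig n p i + p i := by unfold Sorig; ring
      rcases Nat.eq_zero_or_pos m with h0 | hpos
      · have hS0 : Sorig n p i = 0 := by
          rw [Sorig_eq_sum_lt]
          apply Finset.sum_eq_zero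
          intro x hx
          simp only [Finset.mem_filter, Finset.mem_univ, true_and] at hx
          exact absurd hx (by rw [Fin.lt_def]; omega)
        have := hσ0 i
        linarith
      · obtain ⟨j, hjv⟩ : ∃ j : Fin n, j.val = m - 1 := ⟨⟨m - 1, by omega⟩, rfl⟩
        have hji : j < i := by rw [Fin.lt_def]; omega
        have hja : j < a := lt_trans hji hia
        have ihj := ih (m - 1) (by omega) j hjv hja
        have hstep := hseq j i hji (hpre j hja) (hpre i hia)
        have hsc : Sorig n p i = Corig n p j := by
          rw [Sorig_eq_sum_lt]
          unfold Corig
          congr 1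
          ext x
          simp only [Finset.mem_filter, Finset.mem_univ, true_and, Fin.lt_def,
            Fin.le_def]
          omega
        linarith
  -- Sorig a ≤ σ j for any early j with a ≤ j (also gives Sorig a ≤ T1)
  have hSa : ∀ j : Fin n, a < j → σ j + p j ≤ T1 → Sorig n p a ≤ σ j := by
    intro j haj hje
    rcases Nat.eq_zero_or_pos a.val with h0 | hpos
    · have hS0 : Sorig n p a = 0 := by
        rw [Sorig_eq_sum_lt]
        apply Finset.sum_eq_zero
        intro x hx
        simp only [Finset.mem_filter, Finset.mem_univ, true_and] at hx
        exact absurd hx (by rw [Fin.lt_def]; omega)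
      rw [hS0]; exact hσ0 j
    · obtain ⟨i, hiv⟩ : ∃ i : Fin n, i.val = a.val - 1 := ⟨⟨a.val - 1, by omega⟩, rfl⟩
      have hia : i < a := by rw [Fin.lt_def]; omega
      have hij : i < j := lt_trans hia haj
      have hk := key i.val i rfl hia
      have hstep := hseq i j hij (hpre i hia) hje
      have hsc : Sorig n p a = Corig n p i := by
        rw [Sorig_eq_sum_lt]
        unfold Corig
        congr 1
        ext x
        simp only [Finset.mem_filter, Finset.mem_univ, true_and, Fin.lt_def,
          Fin.le_def]
        omega
      linarith
  have hSaT1 : Sorig n p a ≤ T1 := by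
    rcases Nat.eq_zero_or_pos a.val with h0 | hpos
    · have hS0 : Sorig n p a = 0 := by
        rw [Sorig_eq_sum_lt]
        apply Finset.sum_eq_zero
        intro x hx
        simp only [Finset.mem_filter, Finset.mem_univ, true_and] at hx
        exact absurd hx (by rw [Fin.lt_def]; omega)
      linarith
    · obtain ⟨i, hiv⟩ : ∃ i : Fin n, i.val = a.val - 1 := ⟨⟨a.val - 1, by omega⟩, rfl⟩
      have hia : i < a := by rw [Fin.lt_def]; omega
      have hk := key i.val i rfl hia
      have hie := hpre i hia
      have hsc : Sorig n p a = Corig n p i := by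
        rw [Sorig_eq_sum_lt]
        unfold Corig
        congr 1
        ext x
        simp only [Finset.mem_filter, Finset.mem_univ, true_and, Fin.lt_def,
          Fin.le_def]
        omega
      linarith
  have hDeva : Dev n p σ a = T2 - Sorig n p a := by
    unfold Dev
    have h1 : σ a + p a - Corig n p a = T2 - Sorig n p a := by
      unfold Sorig; rw [haT2]; ring
    rw [h1, abs_of_nonneg (by linarith)]
  refine ⟨hDeva, ?_⟩
  intro j haj hjj2 hje
  have hSj : Sorig n p j < T2 := by
    by_contra h
    push_neg at h
    exact absurd (hj2min j h) (not_le.mpr hjj2)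
  have hCj : σ j + p j ≤ Corig n p j := hearly j hje
  have hσja : Sorig n p a ≤ σ j := hSa j haj hje
  have hDevj : Dev n p σ j = Corig n p j - (σ j + p j) := by
    unfold Dev
    rw [abs_of_nonpos (by linarith)]
    ring
  have hCS : Corig n p j = Sorig n p j + p j := by unfold Sorig; ring
  rw [hDevj, hDeva]
  linarith
end

section
/- For the problem with μ = 0 (objective Σ_{j=1}^n w_j·C_j(σ)), there exists an optimal schedule σ* with the property that if the machine idles in the earlier schedule (i.e., σ* has at least one earlier-schedule idle time unit), then Δ_max(σ*) = k. -/
open Finset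

variable (n : ℕ)

/-
In an optimal schedule that idles in the earlier schedule, take the first earlier-schedule job
starting after an idle unit and start it one unit sooner. This keeps the schedule feasible and
strictly lowers the weighted completion time, so by optimality it must break admissibility. Only
the moved job's deviation changed, and it changed by one, so that job completed exactly k units
ahead of its original completion time, i.e. Δ_max = k already.
-/

section

variable {n} {p w : Fin n → ℤ} {T1 T2 k : ℤ} {σ : Fin n → ℤ}

theorem dmax_nonneg : 0 ≤ Dmax n p σ :=
  (Finset.le_fold_max _).mpr (Or.inl le_rfl)

theorem dev_le_dmax (m : Fin n) : Dev n p σ m ≤ Dmax n p σ :=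
  (Finset.le_fold_max _).mpr (Or.inr ⟨m, Finset.mem_univ m, le_rfl⟩)

theorem dmax_le_iff (hk : 0 ≤ k) : Dmax n p σ ≤ k ↔ ∀ m, Dev n p σ m ≤ k := by
  simp [Dmax, Finset.fold_max_le, hk]

theorem wobj_nonneg (hp : ∀ j, 0 ≤ p j) (hw : ∀ j, 0 ≤ w j) (hσ : ∀ j, 0 ≤ σ j) :
    0 ≤ WObj n p w σ :=
  Finset.sum_nonneg fun j _ => mul_nonneg (hw j) (add_nonneg (hσ j) (hp j))

theorem wobj_update (j : Fin n) (s : ℤ) :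
    WObj n p w (Function.update σ j s) = WObj n p w σ + w j * (s - σ j) := by
  rw [← sub_eq_iff_eq_add', WObj, WObj, ← Finset.sum_sub_distrib,
    Finset.sum_eq_single_of_mem j (Finset.mem_univ j) fun i _ hi => by
      rw [Function.update_of_ne hi, sub_self], Function.update_self]
  ring

theorem exists_wobj_minimal (hp : ∀ j, 0 < p j) (hw : ∀ j, 0 < w j)
    (hadm : ∃ σ, Admissible n p T1 T2 k σ) :
    ∃ σ, Admissible n p T1 T2 k σ ∧
      ∀ τ, Admissible n p T1 T2 k τ → WObj n p w σ ≤ WObj n p w τ := by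
  obtain ⟨σ₀, hσ₀⟩ := hadm
  obtain ⟨_, ⟨σ, hσ, rfl⟩, hmin⟩ :=
    Int.exists_least_of_bdd (P := fun z => ∃ σ, Admissible n p T1 T2 k σ ∧ WObj n p w σ = z)
      ⟨0, by
        rintro _ ⟨σ, hσ, rfl⟩
        exact wobj_nonneg (fun j => (hp j).le) (fun j => (hw j).le) hσ.1.1⟩
      ⟨_, σ₀, hσ₀, rfl⟩
  exact ⟨σ, hσ, fun τ hτ => hmin _ ⟨τ, hτ, rfl⟩⟩

theorem Feasible.update (hσ : Feasible n p T1 T2 σ) {j : Fin n} {s : ℤ} (hs : 0 ≤ s)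
    (hdisj : ∀ b, b ≠ j → s + p j ≤ σ b ∨ σ b + p b ≤ s) (hwin : s + p j ≤ T1 ∨ T2 ≤ s) :
    Feasible n p T1 T2 (Function.update σ j s) := by
  obtain ⟨hnn, hσdisj, hσwin⟩ := hσ
  refine ⟨fun m => ?_, fun a b hab => ?_, fun m => ?_⟩
  · rcases eq_or_ne m j with rfl | hm
    · simpa using hs
    · simpa [hm] using hnn m
  · rcases eq_or_ne a j with rfl | ha
    · simpa [Ne.symm hab] using hdisj b (Ne.symm hab)
    rcases eq_or_ne b j with rfl | hb
    · simpa [ha, or_comm] using hdisj a ha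
    · simpa [ha, hb] using hσdisj a b hab
  · rcases eq_or_ne m j with rfl | hm
    · simpa using hwin
    · simpa [hm] using hσwin m

def IsFirstEarlyJobAfter (p : Fin n → ℤ) (T1 : ℤ) (σ : Fin n → ℤ) (t : ℤ) (j : Fin n) : Prop :=
  σ j + p j ≤ T1 ∧ t + 1 ≤ σ j ∧ ∀ m, σ m + p m ≤ T1 → t + 1 ≤ σ m → σ j ≤ σ m

theorem exists_isFirstEarlyJobAfter {t : ℤ} (ht : IdleUnit n p T1 σ t) :
    ∃ j, IsFirstEarlyJobAfter p T1 σ t j := by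
  classical
  obtain ⟨-, -, j₀, hj₀⟩ := ht
  obtain ⟨j, hj, hmin⟩ := (Finset.univ.filter fun m => σ m + p m ≤ T1 ∧ t + 1 ≤ σ m).exists_min_image
    σ ⟨j₀, by simpa using hj₀⟩
  simp only [Finset.mem_filter, Finset.mem_univ, true_and] at hj hmin
  exact ⟨j, hj.1, hj.2, fun m h₁ h₂ => hmin m ⟨h₁, h₂⟩⟩

theorem Feasible.update_pred_of_isFirstEarlyJobAfter (hp : ∀ j, 0 < p j)
    (hσ : Feasible n p T1 T2 σ) {t : ℤ} (ht : IdleUnit n p T1 σ t) {j : Fin n}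
    (hj : IsFirstEarlyJobAfter p T1 σ t j) :
    Feasible n p T1 T2 (Function.update σ j (σ j - 1)) := by
  obtain ⟨ht0, hidle, -⟩ := ht
  obtain ⟨hjT1, hjt, hjmin⟩ := hj
  refine hσ.update (by omega) (fun b hb => ?_) (Or.inl (by omega))
  by_cases hbt : t + 1 ≤ σ b
  · rcases hσ.2.1 j b (Ne.symm hb) with h | h
    · omega
    · have := hp j
      have := hjmin b (by omega) hbt
      have := hp b
      omega
  · have := hidle b
    omega

theorem dmax_eq_of_wobj_minimal_of_idleUnit (hp : ∀ j, 0 < p j) (hw : ∀ j, 0 < w j)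
    (hσ : Admissible n p T1 T2 k σ)
    (hmin : ∀ τ, Admissible n p T1 T2 k τ → WObj n p w σ ≤ WObj n p w τ)
    {t : ℤ} (ht : IdleUnit n p T1 σ t) : Dmax n p σ = k := by
  have hk : 0 ≤ k := dmax_nonneg.trans hσ.2
  obtain ⟨j, hj⟩ := exists_isFirstEarlyJobAfter ht
  set τ := Function.update σ j (σ j - 1)
  have hτ : ¬Dmax n p τ ≤ k := fun hτk => by
    have := hmin τ ⟨hσ.1.update_pred_of_isFirstEarlyJobAfter hp ht hj, hτk⟩
    rw [wobj_update] at this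
    have := hw j
    omega
  obtain ⟨m, hm⟩ : ∃ m, k < Dev n p τ m := by
    simpa [dmax_le_iff hk] using hτ
  have hσm := (dmax_le_iff hk).mp hσ.2 m
  obtain rfl : m = j := by
    by_contra hmj
    simp only [Dev, τ, Function.update_of_ne hmj] at hm hσm
    omega
  have hdev : Dev n p σ m = k := by
    simp only [Dev, τ, Function.update_self] at hm hσm ⊢
    rw [abs_le] at hσm
    rw [lt_abs] at hm
    rw [abs_eq hk]
    omega
  exact le_antisymm hσ.2 (hdev ▸ dev_le_dmax m)

end

theorem stmt_11_general (n : ℕ) (p w : Fin n → ℤ) (T1 T2 k : ℤ)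
    (hp : ∀ j, 0 < p j) (hw : ∀ j, 0 < w j)
    (hadm : ∃ σ, Admissible n p T1 T2 k σ) :
    ∃ σ, (Admissible n p T1 T2 k σ ∧
        ∀ τ, Admissible n p T1 T2 k τ → WObj n p w σ ≤ WObj n p w τ) ∧
      ((∃ t : ℤ, IdleUnit n p T1 σ t) → Dmax n p σ = k) := by
  obtain ⟨σ, hσ, hmin⟩ := exists_wobj_minimal hp hw hadm
  exact ⟨σ, ⟨hσ, hmin⟩, fun ⟨_, ht⟩ => dmax_eq_of_wobj_minimal_of_idleUnit hp hw hσ hmin ht⟩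

/-- for `μ = 0` there exists an optimal schedule in which any
idling in the earlier schedule forces `Δ_max = k`. -/
theorem stmt_11 (n : ℕ) (p w : Fin n → ℤ) (T1 T2 k : ℤ)
    (hn : 0 < n) (hp : ∀ j, 0 < p j) (hw : ∀ j, 0 < w j)
    (hwspt : ∀ i j : Fin n, i ≤ j → p i * w j ≤ p j * w i)
    (hT1 : 0 ≤ T1) (hT12 : T1 < T2) (hk : 0 ≤ k)
    (hadm : ∃ σ, Admissible n p T1 T2 k σ) :
    ∃ σ, (Admissible n p T1 T2 k σ ∧
        ∀ τ, Admissible n p T1 T2 k τ → WObj n p w σ ≤ WObj n p w τ) ∧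
      ((∃ t : ℤ, IdleUnit n p T1 σ t) → Dmax n p σ = k) :=
  stmt_11_general n p w T1 T2 k hp hw hadm
end

section
/- Suppose C_n(π*) > T_1 and let j_1 = min{j : C_j(π*) > T_1}. In every feasible schedule σ there exists a job J_j with j ≤ j_1 that is in the later schedule, and this job satisfies Δ_j(σ) ≥ T_2 − S_{j_1}(π*). Consequently, if an admissible schedule exists (some feasible σ with Δ_max(σ) ≤ k), then T_2 − S_{j_1}(π*) ≤ k. -/
open Finset

variable (n : ℕ)

/-- in every feasible schedule some job `J_j` with `j ≤ j1` is in
the later schedule with deviation at least `T2 − S_{j1}(π*)`; hence if an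
admissible schedule exists then `T2 − S_{j1}(π*) ≤ k`. -/
theorem stmt_12 (n : ℕ) (p w : Fin n → ℤ) (T1 T2 k : ℤ)
    (hn : 0 < n) (hp : ∀ j, 0 < p j) (hw : ∀ j, 0 < w j)
    (hwspt : ∀ i j : Fin n, i ≤ j → p i * w j ≤ p j * w i)
    (hT1 : 0 ≤ T1) (hT12 : T1 < T2) (hk : 0 ≤ k)
    (hP : T1 < ∑ j, p j)
    (j1 : Fin n) (hj1 : T1 < Corig n p j1)
    (hj1min : ∀ j, T1 < Corig n p j → j1 ≤ j) :
    (∀ σ, Feasible n p T1 T2 σ →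
      ∃ j, j ≤ j1 ∧ T2 ≤ σ j ∧ T2 - Sorig n p j1 ≤ Dev n p σ j) ∧
    ((∃ σ, Feasible n p T1 T2 σ ∧ Dmax n p σ ≤ k) → T2 - Sorig n p j1 ≤ k) := by
  have hSlem : ∀ j : Fin n, Sorig n p j = ∑ i ∈ Finset.univ.filter (fun i => i < j), p i := by
    intro j
    have hins : Finset.univ.filter (fun i => i ≤ j) =
        insert j (Finset.univ.filter (fun i => i < j)) := by
      ext x; simp [Finset.mem_filter, le_iff_lt_or_eq, or_comm]
    have hnot : j ∉ Finset.univ.filter (fun i => i < j) := by simp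
    simp [Sorig, Corig, hins, Finset.sum_insert hnot]
  have hSmono : ∀ j : Fin n, j ≤ j1 → Sorig n p j ≤ Sorig n p j1 := by
    intro j hj
    rw [hSlem, hSlem]
    apply Finset.sum_le_sum_of_subset_of_nonneg
    · intro x hx; simp only [Finset.mem_filter, Finset.mem_univ, true_and] at *
      exact lt_of_lt_of_le hx hj
    · intro i _ _; exact (hp i).le
  have key : ∀ σ, Feasible n p T1 T2 σ →
      ∃ j, j ≤ j1 ∧ T2 ≤ σ j ∧ T2 - Sorig n p j1 ≤ Dev n p σ j := by
    intro σ hσ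
    obtain ⟨hnonneg, hdisj, hsplit⟩ := hσ
    by_cases h : ∃ j, j ≤ j1 ∧ T2 ≤ σ j
    · obtain ⟨j, hjle, hT2⟩ := h
      refine ⟨j, hjle, hT2, ?_⟩
      have hS := hSmono j hjle
      have h1 : T2 - Sorig n p j1 ≤ σ j + p j - Corig n p j := by
        have : Sorig n p j = Corig n p j - p j := rfl
        omega
      exact h1.trans (le_abs_self _)
    · exfalso
      push_neg at h
      have hall : ∀ j : Fin n, j ≤ j1 → σ j + p j ≤ T1 := by
        intro j hj
        rcases hsplit j with h1 | h2
        · exact h1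
        · exact absurd h2 (not_le.mpr (h j hj))
      set S := Finset.univ.filter (fun i => i ≤ j1) with hSdef
      set f : Fin n → Finset ℤ := fun i => Finset.Ico (σ i) (σ i + p i) with hf
      have hpd : ∀ i ∈ S, ∀ j ∈ S, i ≠ j → Disjoint (f i) (f j) := by
        intro i _ j _ hij
        rw [Finset.disjoint_left]
        intro x hxi hxj
        simp only [hf, Finset.mem_Ico] at hxi hxj
        rcases hdisj i j hij with h1 | h2 <;> omega
      have hsub : S.biUnion f ⊆ Finset.Ico 0 T1 := by
        intro x hx
        simp only [Finset.mem_biUnion] at hx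
        obtain ⟨i, hiS, hxi⟩ := hx
        simp only [hf, Finset.mem_Ico] at hxi ⊢
        have hi1 : i ≤ j1 := by simpa [hSdef] using hiS
        have := hall i hi1
        have := hnonneg i
        omega
      have hcard : ∑ i ∈ S, ((f i).card : ℤ) ≤ T1 := by
        have h1 : ∑ i ∈ S, (f i).card = (S.biUnion f).card :=
          (Finset.card_biUnion hpd).symm
        have h2 : (S.biUnion f).card ≤ (Finset.Ico (0:ℤ) T1).card :=
          Finset.card_le_card hsub
        have h3 : ((Finset.Ico (0:ℤ) T1).card : ℤ) = T1 := by
          rw [Int.card_Ico]; omega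
        calc ∑ i ∈ S, ((f i).card : ℤ)
            = ((∑ i ∈ S, (f i).card : ℕ) : ℤ) := by push_cast; ring
          _ = ((S.biUnion f).card : ℤ) := by rw [h1]
          _ ≤ ((Finset.Ico (0:ℤ) T1).card : ℤ) := by exact_mod_cast h2
          _ = T1 := h3
      have hsum : ∑ i ∈ S, p i = ∑ i ∈ S, ((f i).card : ℤ) := by
        apply Finset.sum_congr rfl
        intro i _
        simp only [hf, Int.card_Ico]
        have := hp i
        omega
      have hle : (∑ i ∈ S, p i) ≤ T1 := hsum ▸ hcard
      rw [hSdef] at hle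
      have : Corig n p j1 ≤ T1 := by rw [Corig]; exact hle
      omega
  refine ⟨key, ?_⟩
  rintro ⟨σ, hfeas, hdk⟩
  obtain ⟨j, _, _, hdev⟩ := key σ hfeas
  have : Dev n p σ j ≤ Dmax n p σ := by
    rw [Dmax]
    exact (Finset.le_fold_max _).mpr (Or.inr ⟨j, Finset.mem_univ j, le_refl _⟩)
  omega
end

section
/- Let p_i, p_j be positive integers and let t, c_i, c_j be integers with c_i + p_j ≤ c_j. Then max(|t + p_i − p_j − c_i|, |t + p_i − c_j|) ≤ max(|t − c_j|, |t + p_i − c_i|). (Interpretation: if jobs J_j and J_i occupy two adjacent processing slots with J_j completing at time t and J_i completing at time t + p_i, while their completion times in the original schedule are c_j and c_i with c_i + p_j ≤ c_j, then swapping the two jobs — so that J_i completes at t + p_i − p_j and J_j completes at t + p_i — does not increase the maximum of their two time deviations.) -/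
/-- swapping two adjacent jobs `J_j, J_i` (with `J_i` before
`J_j` in the original schedule, so `c_i + p_j ≤ c_j`) does not increase the
maximum of their two time deviations. -/
theorem stmt_16 (pi pj t ci cj : ℤ) (hpi : 0 < pi) (hpj : 0 < pj)
    (h : ci + pj ≤ cj) :
    max |t + pi - pj - ci| |t + pi - cj| ≤ max |t - cj| |t + pi - ci| := by
  rcases abs_cases (t - cj) with ⟨h1,_⟩|⟨h1,_⟩ <;>
  rcases abs_cases (t + pi - ci) with ⟨h2,_⟩|⟨h2,_⟩ <;>
  simp only [max_le_iff, le_max_iff, abs_le, h1, h2] <;> omega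
end

section
/- Let σ be a feasible schedule whose later-schedule jobs appear in increasing index order of start times and are processed consecutively without idle time (every later-schedule job except the one with smallest start time starts exactly at the completion time of the preceding later-schedule job), and suppose every later-schedule job J_m satisfies C_m(σ) ≥ C_m(π*). Then for any two later-schedule jobs J_i, J_j with i < j, Δ_j(σ) ≤ Δ_i(σ); that is, the time deviations of the jobs in the later schedule are non-increasing. -/
open Finset

variable (n : ℕ)

lemma corig_step (n : ℕ) (p : Fin n → ℤ) (hp : ∀ j, 0 < p j) {m j : Fin n} (h : m < j) :
    Corig n p m + p j ≤ Corig n p j := by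
  unfold Corig
  have hj : j ∉ Finset.univ.filter (fun i => i ≤ m) := by
    simp [not_le.mpr h]
  have := Finset.sum_insert (f := p) hj
  rw [add_comm, ← this]
  apply Finset.sum_le_sum_of_subset_of_nonneg
  · intro x hx
    simp only [Finset.mem_insert, Finset.mem_filter, Finset.mem_univ, true_and] at hx ⊢
    rcases hx with rfl | hx
    · exact le_refl x
    · exact le_of_lt (lt_of_le_of_lt hx h)
  · intro x _ _
    exact (hp x).le

/-- if the later schedule is in WSPT order, is processed
consecutively without idle time, and every later-schedule job completes no
earlier than in `π*`, then later-schedule deviations are non-increasing. -/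
theorem stmt_17 (n : ℕ) (p w : Fin n → ℤ) (T1 T2 : ℤ)
    (hn : 0 < n) (hp : ∀ j, 0 < p j) (hw : ∀ j, 0 < w j)
    (hwspt : ∀ i j : Fin n, i ≤ j → p i * w j ≤ p j * w i)
    (hT1 : 0 ≤ T1) (hT12 : T1 < T2)
    (σ : Fin n → ℤ) (hfeas : Feasible n p T1 T2 σ)
    (horder : ∀ i j : Fin n, i < j → T2 ≤ σ i → T2 ≤ σ j → σ i < σ j)
    (hnoidle : ∀ j, T2 ≤ σ j → (∃ m, T2 ≤ σ m ∧ σ m < σ j) →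
      ∃ i, T2 ≤ σ i ∧ σ i + p i = σ j)
    (hlate : ∀ m, T2 ≤ σ m → Corig n p m ≤ σ m + p m) :
    ∀ i j : Fin n, i < j → T2 ≤ σ i → T2 ≤ σ j →
      Dev n p σ j ≤ Dev n p σ i := by
  have key : ∀ N : ℕ, ∀ j : Fin n, (j : ℕ) < N → ∀ i : Fin n, i < j → T2 ≤ σ i → T2 ≤ σ j →
      σ j + p j - Corig n p j ≤ σ i + p i - Corig n p i := by
    intro N
    induction N with
    | zero => intro j hj; omega
    | succ N ih' =>
      intro j hjN i hij hi hj
      have ih : ∀ m : Fin n, m < j → i < m → T2 ≤ σ i → T2 ≤ σ m →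
          σ m + p m - Corig n p m ≤ σ i + p i - Corig n p i := by
        intro m hmj him h1 h2
        exact ih' m (by omega) i him h1 h2
      have hsij : σ i < σ j := horder i j hij hi hj
      obtain ⟨m, hm, hmeq⟩ := hnoidle j hj ⟨i, hi, hsij⟩
      have hmj : m < j := by
        rcases lt_trichotomy m j with h | h | h
        · exact h
        · exfalso; subst h; have := hp m; omega
        · exfalso
          have := horder j m h hj hm
          have := hp m
          omega
      have hstep := corig_step n p hp hmj
      rcases lt_trichotomy m i with h | h | h
      · exfalso
        have hsm : σ m < σ i := horder m i h hm hi
        rcases hfeas.2.1 m i (Fin.ne_of_lt h) with h2 | h2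
        · omega
        · have := hp i; omega
      · subst h; omega
      · have := ih m hmj h hi hm
        omega
  intro i j hij hi hj
  have di : Dev n p σ i = σ i + p i - Corig n p i := by
    unfold Dev; rw [abs_of_nonneg]; have := hlate i hi; omega
  have dj : Dev n p σ j = σ j + p j - Corig n p j := by
    unfold Dev; rw [abs_of_nonneg]; have := hlate j hj; omega
  rw [di, dj]
  exact key (n) j (j.isLt) i hij hi hj
end

section
/- Suppose C_n(π*) > T_1 and let j_1 = min{j : C_j(π*) > T_1}. In every optimal schedule σ* whose later-schedule jobs appear in increasing index order of start times, the later-schedule job J_a of smallest index satisfies: a ≤ j_1, S_a(σ*) = T_2, and Δ_a(σ*) = T_2 − S_a(π*). -/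
open Finset

variable (n : ℕ)

/-- in every optimal schedule whose later-schedule jobs are in
WSPT order, the later-schedule job of smallest index `J_a` satisfies `a ≤ j1`,
starts exactly at `T2`, and has `Δ_a = T2 − S_a(π*)`. -/
theorem stmt_18 (n : ℕ) (p w : Fin n → ℤ) (T1 T2 k : ℤ) (μ : ℚ)
    (hn : 0 < n) (hp : ∀ j, 0 < p j) (hw : ∀ j, 0 < w j)
    (hwspt : ∀ i j : Fin n, i ≤ j → p i * w j ≤ p j * w i)
    (hT1 : 0 ≤ T1) (hT12 : T1 < T2) (hk : 0 ≤ k) (hμ : 0 ≤ μ)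
    (hadm : ∃ σ, Admissible n p T1 T2 k σ)
    (hP : T1 < ∑ j, p j)
    (j1 : Fin n) (hj1 : T1 < Corig n p j1)
    (hj1min : ∀ j, T1 < Corig n p j → j1 ≤ j)
    (σ : Fin n → ℤ) (hopt : Optimal n p w T1 T2 k μ σ)
    (horder : ∀ i j : Fin n, i < j → T2 ≤ σ i → T2 ≤ σ j → σ i < σ j) :
    ∀ a, T2 ≤ σ a → (∀ j, T2 ≤ σ j → a ≤ j) →
      a ≤ j1 ∧ σ a = T2 ∧ Dev n p σ a = T2 - Sorig n p a := by
  intro a ha hamin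
  obtain ⟨⟨⟨hpos, hdisj, hsplit⟩, hDmax⟩, hminZ⟩ := hopt
  -- Sorig as a sum over strictly smaller indices
  have hS : ∀ j : Fin n, Sorig n p j = ∑ i ∈ Finset.univ.filter (fun i => i < j), p i := by
    intro j
    unfold Sorig Corig
    have he : Finset.univ.filter (fun i => i ≤ j)
        = insert j (Finset.univ.filter (fun i : Fin n => i < j)) := by
      ext i
      simp only [Finset.mem_filter, Finset.mem_insert, Finset.mem_univ, true_and]
      constructor
      · intro h; rcases eq_or_lt_of_le h with h' | h'
        · exact Or.inl h'
        · exact Or.inr h'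
      · rintro (h | h)
        · exact le_of_eq h
        · exact le_of_lt h
    rw [he, Finset.sum_insert (by simp)]
    ring
  -- Sorig j1 ≤ T1
  have hSj1 : Sorig n p j1 ≤ T1 := by
    rw [hS]
    rcases Nat.eq_zero_or_pos j1.val with h0 | h0
    · have : Finset.univ.filter (fun i : Fin n => i < j1) = ∅ := by
        ext i
        simp only [Finset.mem_filter, Finset.mem_univ, true_and, Finset.notMem_empty,
          iff_false]
        intro hlt
        exact absurd (Fin.lt_def.mp hlt) (by omega)
      rw [this, Finset.sum_empty]; exact hT1
    · set j' : Fin n := ⟨j1.val - 1, by omega⟩ with hj'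
      have hj'lt : j' < j1 := by
        rw [Fin.lt_def]
        exact Nat.sub_lt h0 Nat.one_pos
      have hC : ¬ T1 < Corig n p j' := by
        intro hc
        exact absurd (hj1min j' hc) (not_le.mpr hj'lt)
      have heq : Finset.univ.filter (fun i : Fin n => i < j1)
          = Finset.univ.filter (fun i : Fin n => i ≤ j') := by
        ext i
        simp only [Finset.mem_filter, Finset.mem_univ, true_and, Fin.lt_def, Fin.le_def]
        have hv : j'.val = j1.val - 1 := rfl
        omega
      rw [heq]
      exact not_lt.mp (by simpa [Corig] using hC)
  -- Claim 1 : a ≤ j1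
  have haj1 : a ≤ j1 := by
    by_contra hcon
    push_neg at hcon
    have hearly : ∀ j : Fin n, j ≤ j1 → σ j + p j ≤ T1 := by
      intro j hj
      rcases hsplit j with h | h
      · exact h
      · exact absurd (hamin j h) (not_le.mpr (lt_of_le_of_lt hj hcon))
    set S := Finset.univ.filter (fun i : Fin n => i ≤ j1) with hSdef
    have hsub : ∀ j ∈ S, Finset.Ico (σ j) (σ j + p j) ⊆ Finset.Ico 0 T1 := by
      intro j hj
      have hj' : j ≤ j1 := (Finset.mem_filter.mp hj).2
      exact Finset.Ico_subset_Ico (hpos j) (hearly j hj')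
    have hd : ∀ i ∈ S, ∀ j ∈ S, i ≠ j →
        Disjoint (Finset.Ico (σ i) (σ i + p i)) (Finset.Ico (σ j) (σ j + p j)) := by
      intro i _ j _ hij
      rcases hdisj i j hij with h | h <;>
      · refine Finset.disjoint_left.mpr (fun t ht ht' => ?_)
        simp only [Finset.mem_Ico] at ht ht'
        omega
    have hcard : ∑ j ∈ S, (Finset.Ico (σ j) (σ j + p j)).card ≤ (Finset.Ico (0:ℤ) T1).card := by
      rw [← Finset.card_biUnion hd]
      exact Finset.card_le_card (Finset.biUnion_subset.mpr hsub)
    have hcast : ∑ j ∈ S, p j ≤ T1 := by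
      have h1 : ∀ j : Fin n, ((Finset.Ico (σ j) (σ j + p j)).card : ℤ) = p j := by
        intro j
        rw [Int.card_Ico]
        have := hp j
        omega
      have h2 : ((Finset.Ico (0:ℤ) T1).card : ℤ) = T1 := by
        rw [Int.card_Ico]; omega
      calc ∑ j ∈ S, p j = ((∑ j ∈ S, (Finset.Ico (σ j) (σ j + p j)).card : ℕ) : ℤ) := by
            push_cast
            exact Finset.sum_congr rfl (fun j _ => (h1 j).symm)
        _ ≤ ((Finset.Ico (0:ℤ) T1).card : ℤ) := by exact_mod_cast hcard
        _ = T1 := h2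
    have : Corig n p j1 ≤ T1 := by simpa [Corig, hSdef] using hcast
    omega
  have hSa : Sorig n p a ≤ T1 := by
    rw [hS] at hSj1 ⊢
    refine le_trans (Finset.sum_le_sum_of_subset_of_nonneg ?_
      (fun i _ _ => le_of_lt (hp i))) hSj1
    intro i hi
    simp only [Finset.mem_filter, Finset.mem_univ, true_and] at hi ⊢
    exact lt_of_lt_of_le hi haj1
  -- Claim 2 : σ a = T2
  have hσa : σ a = T2 := by
    by_contra hne
    have hgt : T2 + 1 ≤ σ a := by omega
    classical
    set τ := Function.update σ a (σ a - 1) with hτ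
    have hτa : τ a = σ a - 1 := Function.update_self a _ σ
    have hτj : ∀ j : Fin n, j ≠ a → τ j = σ j := fun j hj => Function.update_of_ne hj _ σ
    have hfeasτ : Feasible n p T1 T2 τ := by
      refine ⟨?_, ?_, ?_⟩
      · intro j
        by_cases hja : j = a
        · subst hja; rw [hτa]; omega
        · rw [hτj j hja]; exact hpos j
      · intro i j hij
        by_cases hia : i = a
        · subst hia
          have hja : j ≠ i := fun h => hij h.symm
          rw [hτa, hτj j hja]
          rcases hsplit j with h | h
          · right; omega
          · have hij' : i < j := lt_of_le_of_ne (hamin j h) (Ne.symm hja)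
            have := horder i j hij' ha h
            rcases hdisj i j hij with h2 | h2
            · left; omega
            · have := hp j; omega
        · by_cases hja : j = a
          · subst hja
            rw [hτa, hτj i hia]
            rcases hsplit i with h | h
            · left; omega
            · have hij' : j < i := lt_of_le_of_ne (hamin i h) (Ne.symm hia)
              have := horder j i hij' ha h
              rcases hdisj i j hij with h2 | h2
              · have := hp i; omega
              · right; omega
          · rw [hτj i hia, hτj j hja]; exact hdisj i j hij
      · intro j
        by_cases hja : j = a
        · subst hja; rw [hτa]; right; omega
        · rw [hτj j hja]; exact hsplit j
    have hdev : ∀ j : Fin n, Dev n p τ j ≤ Dev n p σ j := by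
      intro j
      by_cases hja : j = a
      · subst hja
        unfold Dev
        rw [hτa]
        have h1 : Corig n p j = Sorig n p j + p j := by unfold Sorig; ring
        have := hp j
        rw [h1]
        have h2 : T2 + 1 - Sorig n p j ≤ σ j - Sorig n p j := by omega
        have h3 : 0 < σ j - Sorig n p j := by omega
        rw [abs_of_nonneg (by omega), abs_of_nonneg (by omega)]
        omega
      · unfold Dev; rw [hτj j hja]
    have hDm : Dmax n p τ ≤ Dmax n p σ := by
      rw [Dmax, Finset.fold_max_le]
      refine ⟨(Finset.le_fold_max _).mpr (Or.inl le_rfl), fun j _ => ?_⟩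
      exact le_trans (hdev j)
        ((Finset.le_fold_max _).mpr (Or.inr ⟨j, Finset.mem_univ j, le_rfl⟩))
    have hadmτ : Admissible n p T1 T2 k τ := ⟨hfeasτ, le_trans hDm hDmax⟩
    have hW : WObj n p w τ = WObj n p w σ - w a := by
      unfold WObj
      have key : ∀ j : Fin n, w j * (τ j + p j)
          = w j * (σ j + p j) - (if j = a then w a else 0) := by
        intro j
        by_cases hja : j = a
        · subst hja; rw [hτa]; simp; ring
        · rw [hτj j hja]; simp [hja]
      rw [Finset.sum_congr rfl (fun j _ => key j), Finset.sum_sub_distrib,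
        Finset.sum_ite_eq' Finset.univ a (fun _ => w a)]
      simp
    have hZ : Zval n p w μ τ < Zval n p w μ σ := by
      unfold Zval
      have h1 : μ * (Dmax n p τ : ℚ) ≤ μ * (Dmax n p σ : ℚ) :=
        mul_le_mul_of_nonneg_left (by exact_mod_cast hDm) hμ
      have h2 : (WObj n p w τ : ℚ) < (WObj n p w σ : ℚ) := by
        have := hw a
        have : WObj n p w τ < WObj n p w σ := by omega
        exact_mod_cast this
      linarith
    exact absurd (hminZ τ hadmτ) (not_le.mpr hZ)
  refine ⟨haj1, hσa, ?_⟩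
  unfold Dev
  rw [hσa]
  have h1 : Corig n p a = Sorig n p a + p a := by unfold Sorig; ring
  rw [h1, abs_of_nonneg (by omega)]
  ring
end

section
/- Let σ be a feasible schedule whose earlier-schedule jobs appear in increasing index order of start times and satisfy C_m(σ) ≤ C_m(π*) for every earlier-schedule job J_m. Let J_i and J_j be earlier-schedule jobs with i < j such that the earlier-schedule jobs with indices in (i, j] are processed consecutively without idle time starting from time C_i(σ) (i.e., C_j(σ) − C_i(σ) equals the sum of the processing times of the earlier-schedule jobs J_m with i < m ≤ j). Then Δ_i(σ) ≤ Δ_j(σ); that is, within a block of the earlier schedule containing no idle time, the time deviations of the jobs are non-decreasing. -/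
open Finset

variable (n : ℕ)

/-- within a block of the earlier schedule containing no idle
time, the time deviations of the jobs are non-decreasing. -/
theorem stmt_19 (n : ℕ) (p w : Fin n → ℤ) (T1 T2 : ℤ)
    (hn : 0 < n) (hp : ∀ j, 0 < p j) (hw : ∀ j, 0 < w j)
    (hwspt : ∀ i j : Fin n, i ≤ j → p i * w j ≤ p j * w i)
    (hT1 : 0 ≤ T1) (hT12 : T1 < T2)
    (σ : Fin n → ℤ) (hfeas : Feasible n p T1 T2 σ)
    (horder : ∀ i j : Fin n, i < j → σ i + p i ≤ T1 → σ j + p j ≤ T1 → σ i < σ j)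
    (hearly : ∀ m, σ m + p m ≤ T1 → σ m + p m ≤ Corig n p m)
    (i j : Fin n) (hij : i < j) (hie : σ i + p i ≤ T1) (hje : σ j + p j ≤ T1)
    (hblock : (σ j + p j) - (σ i + p i) =
      ∑ m ∈ Finset.univ.filter (fun m => σ m + p m ≤ T1 ∧ i < m ∧ m ≤ j), p m) :
    Dev n p σ i ≤ Dev n p σ j := by
  have hdi : Dev n p σ i = Corig n p i - (σ i + p i) := by
    rw [Dev, abs_of_nonpos (by linarith [hearly i hie]), neg_sub]
  have hdj : Dev n p σ j = Corig n p j - (σ j + p j) := by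
    rw [Dev, abs_of_nonpos (by linarith [hearly j hje]), neg_sub]
  rw [hdi, hdj]
  have hcor : Corig n p j - Corig n p i
      = ∑ m ∈ Finset.univ.filter (fun m => i < m ∧ m ≤ j), p m := by
    rw [Corig, Corig, eq_comm, eq_sub_iff_add_eq]
    rw [← Finset.sum_union]
    · congr 1
      ext m
      simp only [Finset.mem_union, Finset.mem_filter, Finset.mem_univ, true_and]
      constructor
      · rintro (⟨h1, h2⟩ | h1)
        · exact h2
        · exact le_trans h1 (le_of_lt hij)
      · intro h
        rcases lt_or_ge i m with h' | h'
        · exact Or.inl ⟨h', h⟩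
        · exact Or.inr h'
    · rw [Finset.disjoint_left]
      intro m hm hm'
      simp only [Finset.mem_filter, Finset.mem_univ, true_and] at hm hm'
      exact absurd hm' (not_le.mpr hm.1)
  have hsum : ∑ m ∈ Finset.univ.filter (fun m => σ m + p m ≤ T1 ∧ i < m ∧ m ≤ j), p m
      ≤ ∑ m ∈ Finset.univ.filter (fun m => i < m ∧ m ≤ j), p m := by
    apply Finset.sum_le_sum_of_subset_of_nonneg
    · intro m hm
      simp only [Finset.mem_filter, Finset.mem_univ, true_and] at hm ⊢
      exact hm.2
    · exact fun m _ _ => le_of_lt (hp m)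
  linarith [hblock, hcor, hsum]
end
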